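/- arXiv:1606.01984 — 2 statements merged into one kernel-verified Lean document; each statement's English description precedes it below -/
import Mathlib

section
/- Let X̄ ∈ ℝ^{m×k} be orthonormal and suppose each weight wᵢ ∈ [w₋, w₊] with 0 < w₋. Under 2k-RIP with constant δ < 1 for the measurement map, the function F(Y) = Σᵢ wᵢ (bᵢ − ⟨Aᵢ, X̄Yᵀ⟩)² satisfies, for all Y, Y' ∈ ℝ^{n×k}: w₋(1−δ)‖Y'−Y‖_F² ≤ F(Y') − F(Y) − ⟨∇F(Y), Y'−Y⟩ ≤ w₊(1+δ)‖Y'−Y‖_F². In particular F is strongly convex and smooth. -/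
open Matrix

/-- Trace inner product ⟨A, M⟩ = tr(AᵀM) = ∑ A_ij M_ij. -/
def ip {a b : ℕ} (A M : Matrix (Fin a) (Fin b) ℝ) : ℝ := ∑ i, ∑ j, A i j * M i j

noncomputable def frob {a b : ℕ} (M : Matrix (Fin a) (Fin b) ℝ) : ℝ :=
  Real.sqrt (∑ i, ∑ j, (M i j) ^ 2)

lemma ip_sub' {a b : ℕ} (A M N : Matrix (Fin a) (Fin b) ℝ) :
    ip A (M - N) = ip A M - ip A N := by
  simp [ip, Matrix.sub_apply, mul_sub, Finset.sum_sub_distrib]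

lemma ip_eq_trace' {a b : ℕ} (A M : Matrix (Fin a) (Fin b) ℝ) :
    ip A M = (Aᵀ * M).trace := by
  simp only [ip, Matrix.trace, Matrix.diag, Matrix.mul_apply, Matrix.transpose_apply]
  exact Finset.sum_comm

lemma ip_trans' {m n k : ℕ} (B : Matrix (Fin m) (Fin n) ℝ) (X : Matrix (Fin m) (Fin k) ℝ)
    (D : Matrix (Fin n) (Fin k) ℝ) : ip (Bᵀ * X) D = ip B (X * Dᵀ) := by
  rw [ip_eq_trace', ip_eq_trace', Matrix.transpose_mul, Matrix.transpose_transpose,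
    ← Matrix.trace_transpose (Xᵀ * B * D), Matrix.transpose_mul, Matrix.transpose_mul,
    Matrix.transpose_transpose]
  rw [Matrix.trace_mul_comm, Matrix.mul_assoc]

lemma frob_mul' {m n k : ℕ} (X : Matrix (Fin m) (Fin k) ℝ) (hX : Xᵀ * X = 1)
    (D : Matrix (Fin n) (Fin k) ℝ) :
    ∑ a, ∑ c, ((X * Dᵀ) a c) ^ 2 = ∑ j, ∑ l, (D j l) ^ 2 := by
  have h1 : ∀ {α β : ℕ} (M : Matrix (Fin α) (Fin β) ℝ),
      ∑ a, ∑ c, (M a c) ^ 2 = (Mᵀ * M).trace := by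
    intro α β M
    simp only [Matrix.trace, Matrix.diag, Matrix.mul_apply, Matrix.transpose_apply, pow_two]
    exact Finset.sum_comm
  rw [h1, h1]
  have h2 : (X * Dᵀ)ᵀ * (X * Dᵀ) = D * Dᵀ := by
    rw [Matrix.transpose_mul, Matrix.transpose_transpose, Matrix.mul_assoc,
      ← Matrix.mul_assoc Xᵀ, hX, Matrix.one_mul]
  rw [h2, Matrix.trace_mul_comm]

lemma sum_rot' {α β γ : Type*} [Fintype α] [Fintype β] [Fintype γ] (f : α → β → γ → ℝ) :
    ∑ j, ∑ l, ∑ i, f j l i = ∑ i, ∑ j, ∑ l, f j l i := by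
  have h : ∀ j : α, ∑ l, ∑ i, f j l i = ∑ i : γ, ∑ l, f j l i := fun j => Finset.sum_comm
  simp_rw [h]
  exact Finset.sum_comm

theorem stmt_10 (m n p k : ℕ)
    (A : Fin p → Matrix (Fin m) (Fin n) ℝ) (b : Fin p → ℝ)
    (w : Fin p → ℝ) (wminus wplus δ : ℝ)
    (hw : ∀ i, wminus ≤ w i ∧ w i ≤ wplus) (hwm : 0 < wminus) (hδ : δ < 1)
    (X : Matrix (Fin m) (Fin k) ℝ) (hX : Xᵀ * X = 1)
    (hRIP : ∀ M : Matrix (Fin m) (Fin n) ℝ, M.rank ≤ 2 * k →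
      (1 - δ) * (∑ a, ∑ c, (M a c) ^ 2) ≤ (∑ i, (ip (A i) M) ^ 2) ∧
      (∑ i, (ip (A i) M) ^ 2) ≤ (1 + δ) * (∑ a, ∑ c, (M a c) ^ 2))
    (F : Matrix (Fin n) (Fin k) ℝ → ℝ)
    (hF : ∀ Y, F Y = ∑ i, w i * (b i - ip (A i) (X * Yᵀ)) ^ 2)
    (G : Matrix (Fin n) (Fin k) ℝ → Matrix (Fin n) (Fin k) ℝ)
    (hG : ∀ Y, G Y = fun j l => ∑ i, 2 * w i * (ip (A i) (X * Yᵀ) - b i) * ((A i)ᵀ * X) j l) :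
    ∀ Y Y' : Matrix (Fin n) (Fin k) ℝ,
      wminus * (1 - δ) * (frob (Y' - Y)) ^ 2 ≤ F Y' - F Y - ip (G Y) (Y' - Y) ∧
      F Y' - F Y - ip (G Y) (Y' - Y) ≤ wplus * (1 + δ) * (frob (Y' - Y)) ^ 2 := by
  intro Y Y'
  set D : Matrix (Fin n) (Fin k) ℝ := Y' - Y with hD
  have hXD : X * Dᵀ = X * Y'ᵀ - X * Yᵀ := by
    rw [hD, Matrix.transpose_sub, Matrix.mul_sub]
  have hsi : ∀ i, ip (A i) (X * Dᵀ) = ip (A i) (X * Y'ᵀ) - ip (A i) (X * Yᵀ) := fun i => by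
    rw [hXD, ip_sub']
  have hGip : ip (G Y) D =
      ∑ i, 2 * w i * (ip (A i) (X * Yᵀ) - b i) * ip (A i) (X * Dᵀ) := by
    have key : ∀ (c : ℝ) (B : Matrix (Fin n) (Fin k) ℝ),
        (∑ j, ∑ l, c * B j l * D j l) = c * ip B D := by
      intro c B
      rw [ip, Finset.mul_sum]
      refine Finset.sum_congr rfl fun j _ => ?_
      rw [Finset.mul_sum]
      exact Finset.sum_congr rfl fun l _ => by ring
    conv_lhs => rw [ip, hG]
    simp only [Finset.sum_mul]
    rw [sum_rot']
    refine Finset.sum_congr rfl fun i _ => ?_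
    rw [key, ip_trans']
  have hmid : F Y' - F Y - ip (G Y) D = ∑ i, w i * (ip (A i) (X * Dᵀ)) ^ 2 := by
    rw [hF, hF, hGip, ← Finset.sum_sub_distrib, ← Finset.sum_sub_distrib]
    refine Finset.sum_congr rfl fun i _ => ?_
    rw [hsi i]; ring
  have hfrob : (frob D) ^ 2 = ∑ j, ∑ l, (D j l) ^ 2 := by
    rw [frob, Real.sq_sqrt]
    positivity
  have hrank : (X * Dᵀ).rank ≤ 2 * k := by
    refine le_trans (le_trans (Matrix.rank_mul_le_left X Dᵀ) (Matrix.rank_le_card_width X)) ?_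
    simp; omega
  obtain ⟨hlo, hhi⟩ := hRIP (X * Dᵀ) hrank
  rw [frob_mul' X hX D] at hlo hhi
  have h1 : wminus * (∑ i, (ip (A i) (X * Dᵀ)) ^ 2) ≤ ∑ i, w i * (ip (A i) (X * Dᵀ)) ^ 2 := by
    rw [Finset.mul_sum]
    exact Finset.sum_le_sum fun i _ => mul_le_mul_of_nonneg_right (hw i).1 (sq_nonneg _)
  have h2 : (∑ i, w i * (ip (A i) (X * Dᵀ)) ^ 2) ≤ wplus * ∑ i, (ip (A i) (X * Dᵀ)) ^ 2 := by
    rw [Finset.mul_sum]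
    exact Finset.sum_le_sum fun i _ => mul_le_mul_of_nonneg_right (hw i).2 (sq_nonneg _)
  constructor
  · rw [hmid, hfrob]
    nlinarith [mul_le_mul_of_nonneg_left hlo hwm.le]
  · rw [hmid, hfrob]
    rcases isEmpty_or_nonempty (Fin p) with he | hne
    · have hs0 : (∑ i, (ip (A i) (X * Dᵀ)) ^ 2) = 0 := by simp
      have hD2 : (∑ j, ∑ l, (D j l) ^ 2) = 0 := by
        have hnn : (0:ℝ) ≤ ∑ j, ∑ l, (D j l) ^ 2 := by positivity
        nlinarith
      rw [hD2]
      have : (∑ i, w i * (ip (A i) (X * Dᵀ)) ^ 2) = 0 := by simp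
      simp [this]
    · obtain ⟨i0⟩ := hne
      have hwp : 0 < wplus := lt_of_lt_of_le hwm (le_trans (hw i0).1 (hw i0).2)
      nlinarith [mul_le_mul_of_nonneg_left hhi hwp.le]
end

section
/- Let Ū ∈ ℝ^{m×k} and X̄ ∈ ℝ^{m×k} be orthonormal. Then ‖Ūᵀ(X̄X̄ᵀ − I_m)Ū‖_F ≤ 2k and, more precisely, ‖Ūᵀ(X̄X̄ᵀ − I_m)Ū‖_F ≤ √(2k)·‖X̄ − Ū‖_F. -/
open Matrix

attribute [local instance] Matrix.frobeniusSeminormedAddCommGroup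

lemma frob_eq_norm {a b : ℕ} (M : Matrix (Fin a) (Fin b) ℝ) : frob M = ‖M‖ := by
  rw [Matrix.frobenius_norm_def, frob, Real.sqrt_eq_rpow]
  congr 1
  refine Finset.sum_congr rfl fun i _ => Finset.sum_congr rfl fun j _ => ?_
  rw [Real.rpow_two, Real.norm_eq_abs, sq_abs]

lemma frob_nonneg {a b : ℕ} (M : Matrix (Fin a) (Fin b) ℝ) : 0 ≤ frob M :=
  Real.sqrt_nonneg _

lemma frob_mul_le {a b c : ℕ} (A : Matrix (Fin a) (Fin b) ℝ) (B : Matrix (Fin b) (Fin c) ℝ) :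
    frob (A * B) ≤ frob A * frob B := by
  simp only [frob_eq_norm]; exact Matrix.frobenius_norm_mul A B

lemma frob_transpose {a b : ℕ} (M : Matrix (Fin a) (Fin b) ℝ) : frob Mᵀ = frob M := by
  simp only [frob_eq_norm]; exact Matrix.frobenius_norm_transpose M

lemma frob_neg {a b : ℕ} (M : Matrix (Fin a) (Fin b) ℝ) : frob (-M) = frob M := by
  simp only [frob_eq_norm]; exact norm_neg M

lemma sumsq_eq_trace {a b : ℕ} (M : Matrix (Fin a) (Fin b) ℝ) :
    ∑ i, ∑ j, (M i j) ^ 2 = trace (Mᵀ * M) := by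
  simp only [Matrix.trace, Matrix.mul_apply, Matrix.diag, Matrix.transpose_apply, sq]
  rw [Finset.sum_comm]

lemma frob_proj_mul_le {a b : ℕ} (P : Matrix (Fin a) (Fin a) ℝ) (A : Matrix (Fin a) (Fin b) ℝ)
    (hPs : Pᵀ = P) (hPi : P * P = P) : frob (P * A) ≤ frob A := by
  apply Real.sqrt_le_sqrt
  rw [sumsq_eq_trace, sumsq_eq_trace]
  have hQs : (1 - P)ᵀ = 1 - P := by
    rw [Matrix.transpose_sub, Matrix.transpose_one, hPs]
  have hQi : (1 - P) * (1 - P) = 1 - P := by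
    have h : (1 - P) * (1 - P) = 1 - P - P + P * P := by noncomm_ring
    rw [h, hPi]; abel
  have e1 : (P * A)ᵀ * (P * A) = Aᵀ * (P * A) := by
    rw [Matrix.transpose_mul, Matrix.mul_assoc, ← Matrix.mul_assoc Pᵀ, hPs, hPi]
  have e2 : ((1 - P) * A)ᵀ * ((1 - P) * A) = Aᵀ * ((1 - P) * A) := by
    rw [Matrix.transpose_mul, Matrix.mul_assoc, ← Matrix.mul_assoc (1 - P)ᵀ, hQs, hQi]
  have key : (P * A)ᵀ * (P * A) + ((1 - P) * A)ᵀ * ((1 - P) * A) = Aᵀ * A := by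
    rw [e1, e2, ← Matrix.mul_add, ← Matrix.add_mul]
    have : P + (1 - P) = 1 := by abel
    rw [this, Matrix.one_mul]
  have hnn : 0 ≤ trace (((1 - P) * A)ᵀ * ((1 - P) * A)) := by
    rw [← sumsq_eq_trace]; positivity
  calc trace ((P * A)ᵀ * (P * A))
      ≤ trace ((P * A)ᵀ * (P * A)) + trace (((1 - P) * A)ᵀ * ((1 - P) * A)) := by linarith
    _ = trace (Aᵀ * A) := by rw [← Matrix.trace_add, key]

theorem stmt_13 (m k : ℕ) (X U : Matrix (Fin m) (Fin k) ℝ)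
    (hX : Xᵀ * X = 1) (hU : Uᵀ * U = 1) :
    frob (Uᵀ * (X * Xᵀ - 1) * U) ≤ 2 * k ∧
      frob (Uᵀ * (X * Xᵀ - 1) * U) ≤ Real.sqrt (2 * k) * frob (X - U) := by
  set P : Matrix (Fin m) (Fin m) ℝ := 1 - X * Xᵀ with hP
  have hPs : Pᵀ = P := by
    rw [hP, Matrix.transpose_sub, Matrix.transpose_one, Matrix.transpose_mul,
      Matrix.transpose_transpose]
  have hXXi : (X * Xᵀ) * (X * Xᵀ) = X * Xᵀ := by
    rw [Matrix.mul_assoc, ← Matrix.mul_assoc Xᵀ, hX, Matrix.one_mul]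
  have hPi : P * P = P := by
    have h : P * P = 1 - X * Xᵀ - X * Xᵀ + (X * Xᵀ) * (X * Xᵀ) := by rw [hP]; noncomm_ring
    rw [h, hXXi, hP]; abel
  have hM : Uᵀ * (X * Xᵀ - 1) * U = -((P * U)ᵀ * (P * U)) := by
    have e1 : (P * U)ᵀ * (P * U) = Uᵀ * (P * U) := by
      rw [Matrix.transpose_mul, Matrix.mul_assoc, ← Matrix.mul_assoc Pᵀ, hPs, hPi]
    rw [e1]
    have hneg : X * Xᵀ - 1 = -P := by rw [hP]; abel
    rw [hneg, Matrix.mul_neg, Matrix.neg_mul, Matrix.mul_assoc]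
  have hfM : frob (Uᵀ * (X * Xᵀ - 1) * U) = frob ((P * U)ᵀ * (P * U)) := by
    rw [hM, frob_neg]
  have h3 : frob ((P * U)ᵀ * (P * U)) ≤ frob (P * U) * frob (P * U) := by
    calc frob ((P * U)ᵀ * (P * U)) ≤ frob (P * U)ᵀ * frob (P * U) := frob_mul_le _ _
      _ = frob (P * U) * frob (P * U) := by rw [frob_transpose]
  have hPX : P * X = 0 := by
    rw [hP, Matrix.sub_mul, Matrix.one_mul, Matrix.mul_assoc, hX, Matrix.mul_one, sub_self]
  have hPU : P * U = P * (U - X) := by rw [Matrix.mul_sub, hPX, sub_zero]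
  have h4 : frob (P * U) ≤ frob (X - U) := by
    rw [hPU]
    calc frob (P * (U - X)) ≤ frob (U - X) := frob_proj_mul_le P (U - X) hPs hPi
      _ = frob (X - U) := by rw [show U - X = -(X - U) by abel, frob_neg]
  have h5 : frob (P * U) ≤ frob U := frob_proj_mul_le P U hPs hPi
  have hUfrob : frob U = Real.sqrt k := by
    rw [frob]
    congr 1
    rw [sumsq_eq_trace, hU, Matrix.trace_one]
    simp
  have hk0 : (0:ℝ) ≤ (k:ℝ) := Nat.cast_nonneg k
  have hk2 : Real.sqrt k ≤ Real.sqrt (2 * k) := by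
    apply Real.sqrt_le_sqrt; linarith
  constructor
  · -- frob M ≤ frob(PU)^2 ≤ frob(U)^2 = k ≤ 2k
    have : frob (P * U) * frob (P * U) ≤ frob U * frob U :=
      mul_le_mul h5 h5 (frob_nonneg _) ((frob_nonneg _).trans h5)
    have hUU : frob U * frob U = (k:ℝ) := by
      rw [hUfrob, Real.mul_self_sqrt hk0]
    rw [hfM]
    calc frob ((P * U)ᵀ * (P * U)) ≤ frob U * frob U := h3.trans this
      _ = (k:ℝ) := hUU
      _ ≤ 2 * k := by linarith
  · rw [hfM]
    calc frob ((P * U)ᵀ * (P * U)) ≤ frob (P * U) * frob (P * U) := h3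
      _ ≤ frob U * frob (X - U) :=
          mul_le_mul h5 h4 (frob_nonneg _) ((frob_nonneg _).trans h5)
      _ ≤ Real.sqrt (2 * k) * frob (X - U) := by
          rw [hUfrob]
          exact mul_le_mul_of_nonneg_right hk2 (frob_nonneg _)
end
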